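/- arXiv:math/0212095 — 3 statements merged into one kernel-verified Lean document; each statement's English description precedes it below -/
import Mathlib

section
/- For a group G, let fold : G * G → G be the homomorphism from the free product induced by the identity on each factor, and let K = ker(G * G → G × G) be the kernel of the canonical map from the free product to the direct product. Then the image of K under fold is exactly the commutator subgroup [G, G]. -/
/-! Modulo `[G,G]` the fold map only sees the two coordinates of `G ∗ G → G × G`, so it kills
the kernel; conversely every commutator `⁅a, b⁆` is the fold of `⁅inl a, inr b⁆`, which lies in
the kernel. -/

open Monoid

/-- The fold map `G ∗ G →* G` induced by the identity on each free factor. -/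
noncomputable def foldHom (G : Type*) [Group G] : Coprod G G →* G :=
  Coprod.lift (MonoidHom.id G) (MonoidHom.id G)

/-- The canonical map `G ∗ G →* G × G` from the free product to the direct product. -/
noncomputable def toProdHom (G : Type*) [Group G] : Coprod G G →* G × G :=
  Coprod.lift (MonoidHom.inl G G) (MonoidHom.inr G G)

open scoped commutatorElement

section

variable {G : Type*} [Group G]

theorem abelianization_of_foldHom (w : Coprod G G) :
    Abelianization.of (foldHom G w) =
      Abelianization.of (toProdHom G w).1 * Abelianization.of (toProdHom G w).2 := by
  have hcomp : Abelianization.of.comp (foldHom G) =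
      (Abelianization.of.comp (MonoidHom.fst G G) *
        Abelianization.of.comp (MonoidHom.snd G G)).comp (toProdHom G) := by
    apply Coprod.hom_ext <;> ext x <;> simp [foldHom, toProdHom]
  exact DFunLike.congr_fun hcomp w

theorem foldHom_mem_commutator_of_mem_ker {w : Coprod G G} (hw : w ∈ (toProdHom G).ker) :
    foldHom G w ∈ commutator G := by
  have h := abelianization_of_foldHom w
  rw [MonoidHom.mem_ker.mp hw, Prod.fst_one, Prod.snd_one, map_one, mul_one] at h
  exact (QuotientGroup.eq_one_iff _).mp h

theorem toProdHom_commutatorElement_inl_inr (a b : G) :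
    toProdHom G ⁅(Coprod.inl a : Coprod G G), Coprod.inr b⁆ = 1 := by
  simp [toProdHom, commutatorElement_def]

theorem foldHom_commutatorElement_inl_inr (a b : G) :
    foldHom G ⁅(Coprod.inl a : Coprod G G), Coprod.inr b⁆ = ⁅a, b⁆ := by
  simp [foldHom, commutatorElement_def]

end

/-- The image under the fold map of the kernel of
`G ∗ G → G × G` is exactly the commutator subgroup `[G,G]`. -/
theorem stmt1 (G : Type*) [Group G] :
    Subgroup.map (foldHom G) (toProdHom G).ker = commutator G := by
  refine le_antisymm ?_ ?_
  · rintro _ ⟨w, hw, rfl⟩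
    exact foldHom_mem_commutator_of_mem_ker hw
  · rw [commutator_eq_closure, Subgroup.closure_le]
    rintro _ ⟨a, b, rfl⟩
    exact ⟨_, toProdHom_commutatorElement_inl_inr a b, foldHom_commutatorElement_inl_inr a b⟩
end

section
/- Let F be a functor from pointed types to groups with cross effects defined as intersections of kernels of collapse maps. For pointed types X₁,...,X_{n+1}, the group cr_{n+1}F(X₁,...,X_{n+1}) is a retract of ⊥_{n+1}F(X₁ ∨ ⋯ ∨ X_{n+1}) := cr_{n+1}F(W,...,W) where W = X₁ ∨ ⋯ ∨ X_{n+1}: there exist group homomorphisms i : cr_{n+1}F(X₁,...,X_{n+1}) → ⊥_{n+1}F(W) and r : ⊥_{n+1}F(W) → cr_{n+1}F(X₁,...,X_{n+1}) with r ∘ i = id. In particular, if ⊥_{n+1}F(W) is trivial then cr_{n+1}F(X₁,...,X_{n+1}) is trivial. -/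
open CategoryTheory

universe u

/-- The wedge `⋁ᵢ Xᵢ` of a family of pointed types, modeled as the subset of the
product consisting of tuples with at most one non-basepoint coordinate. -/
def Wedge {I : Type} (X : I → Pointed.{u}) : Pointed.{u} where
  X := {p : ∀ i, (X i).X // ∀ i j, p i ≠ (X i).point → p j ≠ (X j).point → i = j}
  point := ⟨fun i => (X i).point, fun i _ hi _ => absurd rfl hi⟩

/-- The collapse map `⋁ᵢ Xᵢ → ⋁_{i ∈ S} Xᵢ` killing the summands outside `S`. -/
def wedgeProj {I : Type} (X : I → Pointed.{u}) (S : Set I) :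
    Wedge X ⟶ Wedge (fun i : S => X i) where
  toFun p := ⟨fun i => p.1 i, fun i j hi hj => Subtype.ext (p.2 i j hi hj)⟩
  map_point := rfl

/-- The map of wedges induced by a family of pointed maps. -/
def wedgeMap {I : Type} {X Y : I → Pointed.{u}} (f : ∀ i, X i ⟶ Y i) :
    Wedge X ⟶ Wedge Y where
  toFun p := ⟨fun i => (f i).toFun (p.1 i), fun i j hi hj =>
    p.2 i j (fun h => hi (by show (f i).toFun (p.1 i) = _; rw [h, (f i).map_point]))
      (fun h => hj (by show (f j).toFun (p.1 j) = _; rw [h, (f j).map_point]))⟩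
  map_point := by
    apply Subtype.ext
    funext i
    exact (f i).map_point

/-- The `I`-th cross effect of `F : Pointed ⥤ Grp` at the family `X`, as a subgroup
of `F(⋁ᵢ Xᵢ)`: the intersection of the kernels of the maps induced by collapsing
each wedge summand. -/
def crEff {I : Type} (F : Pointed.{u} ⥤ GrpCat.{u}) (X : I → Pointed.{u}) :
    Subgroup (F.obj (Wedge X)) :=
  ⨅ j : I, MonoidHom.ker (F.map (wedgeProj X {i | i ≠ j})).hom

/-- The inclusion of the `j`-th summand `X j → ⋁ᵢ Xᵢ`. -/
def wedgeIncl {I : Type} [DecidableEq I] (X : I → Pointed.{u}) (j : I) :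
    X j ⟶ Wedge X where
  toFun x := ⟨fun i => if h : i = j then cast (congrArg (fun k => (X k).X) h).symm x
      else (X i).point,
    fun i i' hi hi' => by
      by_cases h : i = j
      · by_cases h' : i' = j
        · exact h.trans h'.symm
        · exact absurd (dif_neg h') hi'
      · exact absurd (dif_neg h) hi⟩
  map_point := by
    apply Subtype.ext
    funext i
    by_cases h : i = j
    · subst h; simp; rfl
    · simp [h]; rfl

/-- The collapse `⋁ᵢ Xᵢ → X j` of all summands except the `j`-th. -/
def wedgeCollapse {I : Type} (X : I → Pointed.{u}) (j : I) :
    Wedge X ⟶ X j where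
  toFun p := p.1 j
  map_point := rfl

/-!
Cross effects are functorial in each variable: a family of pointed maps `fᵢ : Xᵢ → Yᵢ`
induces `⋁ fᵢ`, which commutes with every collapse of wedge summands and hence maps
`cr F(X)` into `cr F(Y)`. The retraction is the image under this functor of the
retractions `Xⱼ → W → Xⱼ`.
-/

theorem Subgroup.eq_bot_of_retract {G G' : Type*} [Group G] [Group G'] {H : Subgroup G}
    {K : Subgroup G'} (i : H →* K) (r : K →* H) (hri : r.comp i = MonoidHom.id H)
    (hK : K = ⊥) : H = ⊥ := by
  subst hK
  have hi : Function.Injective i :=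
    Function.LeftInverse.injective (g := r) (DFunLike.congr_fun hri)
  have := hi.subsingleton
  exact H.eq_bot_of_subsingleton

section Functoriality

variable {I : Type} (F : Pointed.{u} ⥤ GrpCat.{u}) {X Y Z : I → Pointed.{u}}

theorem wedgeMap_id : wedgeMap (fun i => 𝟙 (X i)) = 𝟙 (Wedge X) := rfl

theorem wedgeMap_comp (f : ∀ i, X i ⟶ Y i) (g : ∀ i, Y i ⟶ Z i) :
    wedgeMap f ≫ wedgeMap g = wedgeMap (fun i => f i ≫ g i) := rfl

theorem wedgeMap_comp_wedgeProj (f : ∀ i, X i ⟶ Y i) (S : Set I) :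
    wedgeMap f ≫ wedgeProj Y S = wedgeProj X S ≫ wedgeMap (fun i : S => f i) := rfl

theorem mem_crEff_iff (g : F.obj (Wedge X)) :
    g ∈ crEff F X ↔ ∀ j : I, F.map (wedgeProj X {i | i ≠ j}) g = 1 := by
  simp only [crEff, Subgroup.mem_iInf, MonoidHom.mem_ker]

theorem map_wedgeMap_mem_crEff (f : ∀ i, X i ⟶ Y i) {g : F.obj (Wedge X)}
    (hg : g ∈ crEff F X) : F.map (wedgeMap f) g ∈ crEff F Y := by
  rw [mem_crEff_iff] at hg ⊢
  intro j
  rw [← GrpCat.comp_apply, ← F.map_comp, wedgeMap_comp_wedgeProj, F.map_comp,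
    GrpCat.comp_apply, hg j, map_one]

def crEffMap (f : ∀ i, X i ⟶ Y i) : crEff F X →* crEff F Y :=
  ((F.map (wedgeMap f)).hom.comp (crEff F X).subtype).codRestrict _
    fun g => map_wedgeMap_mem_crEff F f g.2

@[simp]
theorem coe_crEffMap (f : ∀ i, X i ⟶ Y i) (g : crEff F X) :
    (crEffMap F f g : F.obj (Wedge Y)) = F.map (wedgeMap f) g := rfl

theorem crEffMap_id : crEffMap F (fun i => 𝟙 (X i)) = MonoidHom.id _ := by
  ext g
  simp [wedgeMap_id]

theorem crEffMap_comp (f : ∀ i, X i ⟶ Y i) (g : ∀ i, Y i ⟶ Z i) :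
    (crEffMap F g).comp (crEffMap F f) = crEffMap F (fun i => f i ≫ g i) := by
  ext x
  simp [← wedgeMap_comp]

end Functoriality

theorem wedgeIncl_comp_wedgeCollapse {I : Type} [DecidableEq I] (X : I → Pointed.{u}) (j : I) :
    wedgeIncl X j ≫ wedgeCollapse X j = 𝟙 (X j) := by
  apply Pointed.Hom.ext
  funext x
  show ((wedgeIncl X j).toFun x).1 j = x
  simp [wedgeIncl]

/-- `cr_{n+1}F(X₁,…,X_{n+1})` is a retract of
`⊥_{n+1}F(W) = cr_{n+1}F(W,…,W)` where `W = X₁ ∨ ⋯ ∨ X_{n+1}`: there are group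
homomorphisms `i` and `r`, induced respectively by the wedge inclusions `Xⱼ → W`
and the collapses `W → Xⱼ` in each variable, with `r ∘ i = id`.  In particular,
if `⊥_{n+1}F(W)` is trivial then so is `cr_{n+1}F(X₁,…,X_{n+1})`. -/
theorem stmt7 (n : ℕ) (F : Pointed.{u} ⥤ GrpCat.{u}) (X : Fin (n + 1) → Pointed.{u}) :
    ∃ (i : crEff F X →* crEff F (fun _ : Fin (n + 1) => Wedge X))
      (r : crEff F (fun _ : Fin (n + 1) => Wedge X) →* crEff F X),
      (∀ g : crEff F X,
        ((i g : F.obj (Wedge (fun _ : Fin (n + 1) => Wedge X))) =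
          F.map (wedgeMap (fun j => wedgeIncl X j)) (g : F.obj (Wedge X)))) ∧
      (∀ g : crEff F (fun _ : Fin (n + 1) => Wedge X),
        ((r g : F.obj (Wedge X)) =
          F.map (wedgeMap (fun j => wedgeCollapse X j))
            (g : F.obj (Wedge (fun _ : Fin (n + 1) => Wedge X))))) ∧
      r.comp i = MonoidHom.id _ ∧
      (crEff F (fun _ : Fin (n + 1) => Wedge X) = ⊥ → crEff F X = ⊥) := by
  have hri : (crEffMap F (wedgeCollapse X)).comp (crEffMap F (wedgeIncl X)) =
      MonoidHom.id _ := by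
    simp only [crEffMap_comp, wedgeIncl_comp_wedgeCollapse, crEffMap_id]
  exact ⟨crEffMap F (wedgeIncl X), crEffMap F (wedgeCollapse X), fun _ => rfl, fun _ => rfl,
    hri, Subgroup.eq_bot_of_retract _ _ hri⟩
end

section
/- Let H be a symmetric multiadditive functor of n variables from abelian groups to abelian groups, with symmetric structure maps σ_* : H(X₁,...,Xₙ) → H(X_{σ⁻¹(1)},...,X_{σ⁻¹(n)}) for σ ∈ Σₙ satisfying (στ)_* = σ_* τ_*. Fix an abelian group X and set all variables equal to X; write H[σ] = H(X,...,X) regarded as the value at the σ-permuted tuple, and let r_σ : H[σ⁻¹] → H[1] be the relabeling isomorphism. Define ⊥ₙH(X) as the joint kernel of the collapse maps from H(⊕ⁿX,...,⊕ⁿX), which by multiadditivity is isomorphic to ∏_{σ ∈ Σₙ} H[σ]. Then the map Σₙ⁺-indexed sum ⊕_{σ∈Σₙ} H[1] → ∏_{σ∈Σₙ} H[σ], sending the σ-summand by the relabeling isomorphism r_σ, is an isomorphism, and under this identification the counit ε : ⊥ₙH(X) → H(X) induced by the fold map ⊕ⁿX → X corresponds to the map ⊕_{σ∈Σₙ} H[1]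 → H[1] that is the identity on each summand. -/
/-!
Multiadditivity makes `H.map` additive in each component of a morphism of families, i.e. a
multilinear map. Writing the identity of `⊕ⁿX` as the sum of the coordinate idempotents
`coordProj X i` therefore expands every `x ∈ H(⊕ⁿX, …, ⊕ⁿX)` as a sum over all
`φ : Fin n → Fin n` of `H(coordProj X (φ 1), …, coordProj X (φ n)) x`. For `x ∈ ⊥ₙH(X)` the
terms with `φ` not surjective vanish, as they factor through a collapse map, and for a
permutation `σ` the term is `H(inclMor σ) (H(projMor σ) x)`. The maps `H(projMor τ)` separate
the summands, since `inclMor σ ≫ projMor τ` has a zero component unless `σ = τ`, and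
`inclMor σ ≫ foldMor = 𝟙` gives the counit.
-/

open CategoryTheory

/-- Update the `i`-th entry of a family of abelian groups. -/
def upd {n : ℕ} (X : Fin n → AddCommGrpCat.{0}) (i : Fin n) (A : AddCommGrpCat.{0}) :
    Fin n → AddCommGrpCat.{0} :=
  fun j => if j = i then A else X j

/-- The morphism of families projecting `A × B` onto `A` in the `i`-th slot. -/
def updProj₁ {n : ℕ} (X : Fin n → AddCommGrpCat.{0}) (i : Fin n) (A B : AddCommGrpCat.{0}) :
    upd X i (AddCommGrpCat.of (A × B)) ⟶ upd X i A :=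
  fun j =>
    if h : j = i then
      eqToHom (by simp [upd, h]) ≫ AddCommGrpCat.ofHom (AddMonoidHom.fst A B) ≫
        eqToHom (by simp only [upd, if_pos h])
    else eqToHom (by simp [upd, h])

/-- The morphism of families projecting `A × B` onto `B` in the `i`-th slot. -/
def updProj₂ {n : ℕ} (X : Fin n → AddCommGrpCat.{0}) (i : Fin n) (A B : AddCommGrpCat.{0}) :
    upd X i (AddCommGrpCat.of (A × B)) ⟶ upd X i B :=
  fun j =>
    if h : j = i then
      eqToHom (by simp [upd, h]) ≫ AddCommGrpCat.ofHom (AddMonoidHom.snd A B) ≫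
        eqToHom (by simp only [upd, if_pos h])
    else eqToHom (by simp [upd, h])

/-- The morphism of families from the constant family at `⊕ᵢXᵢ` to `X ∘ f`, whose
`j`-th component is the projection onto the `f j`-th coordinate. -/
def projMor {n : ℕ} (X : Fin n → AddCommGrpCat.{0}) (f : Fin n → Fin n) :
    (fun _ : Fin n => AddCommGrpCat.of (∀ i, X i)) ⟶ (X ∘ f) :=
  fun j => AddCommGrpCat.ofHom (Pi.evalAddMonoidHom (fun i => X i) (f j))

/-- The reindexing functor `A ↦ A ∘ σ` on families of abelian groups. -/
def reindexF {n : ℕ} (σ : Equiv.Perm (Fin n)) :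
    (∀ _ : Fin n, AddCommGrpCat.{0}) ⥤ (∀ _ : Fin n, AddCommGrpCat.{0}) where
  obj A := fun i => A (σ i)
  map f := fun i => f (σ i)

/-- The morphism of families placing `X` in the `σ j`-th summand of `⊕ⁿX` in the
`j`-th variable (the "inclusion indexed by the permutation `σ`"). -/
def inclMor {n : ℕ} (X : AddCommGrpCat.{0}) (σ : Equiv.Perm (Fin n)) :
    (fun _ : Fin n => X) ⟶ (fun _ : Fin n => AddCommGrpCat.of (∀ _ : Fin n, X)) :=
  fun j => AddCommGrpCat.ofHom (AddMonoidHom.single (fun _ : Fin n => X) (σ j))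

/-- The morphism of families collapsing the `j`-th summand of `⊕ⁿX`
(simultaneously in every variable). -/
def collapseMor {n : ℕ} (X : AddCommGrpCat.{0}) (j : Fin n) :
    (fun _ : Fin n => AddCommGrpCat.of (∀ _ : Fin n, X)) ⟶
      (fun _ : Fin n => AddCommGrpCat.of (∀ _ : {i : Fin n // i ≠ j}, X)) :=
  fun _ => AddCommGrpCat.ofHom
    (AddMonoidHom.mk' (fun v i => v i.1) (fun _ _ => rfl))

/-- The fold morphism of families `⊕ⁿX → X` (diagonally in all variables). -/
noncomputable def foldMor {n : ℕ} (X : AddCommGrpCat.{0}) :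
    (fun _ : Fin n => AddCommGrpCat.of (∀ _ : Fin n, X)) ⟶ (fun _ : Fin n => X) :=
  fun _ => AddCommGrpCat.ofHom
    (AddMonoidHom.mk' (fun v => ∑ i, v i) (fun a b => by
      simp [Finset.sum_add_distrib]))

/-- `⊥ₙH(X)`: the joint kernel of the collapse maps out of `H(⊕ⁿX,…,⊕ⁿX)`. -/
noncomputable def perpN {n : ℕ} (H : (∀ _ : Fin n, AddCommGrpCat.{0}) ⥤ AddCommGrpCat.{0})
    (X : AddCommGrpCat.{0}) :
    AddSubgroup (H.obj (fun _ : Fin n => AddCommGrpCat.of (∀ _ : Fin n, X))) :=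
  ⨅ j : Fin n, (H.map (collapseMor X j)).hom.ker

section

variable {n : ℕ}

def IsMultiadditive (H : (∀ _ : Fin n, AddCommGrpCat.{0}) ⥤ AddCommGrpCat.{0}) : Prop :=
  ∀ (X : Fin n → AddCommGrpCat.{0}) (i : Fin n) (A B : AddCommGrpCat.{0}),
    Function.Bijective (fun x : H.obj (upd X i (AddCommGrpCat.of (A × B))) =>
      (H.map (updProj₁ X i A B) x, H.map (updProj₂ X i A B) x))

lemma upd_self (Y : Fin n → AddCommGrpCat.{0}) (k : Fin n) : upd Y k (Y k) = Y := by
  funext j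
  by_cases h : j = k
  · subst h; simp [upd]
  · simp [upd, h]

def updMap (Z : Fin n → AddCommGrpCat.{0}) (k : Fin n) {A B : AddCommGrpCat.{0}} (g : A ⟶ B) :
    upd Z k A ⟶ upd Z k B :=
  fun j => if h : j = k then eqToHom (by simp [upd, h]) ≫ g ≫ eqToHom (by simp [upd, h])
    else eqToHom (by simp [upd, h])

def updOff {Y Z : Fin n → AddCommGrpCat.{0}} (f : Y ⟶ Z) (k : Fin n) (A : AddCommGrpCat.{0}) :
    upd Y k A ⟶ upd Z k A :=
  fun j => if h : j = k then eqToHom (by simp [upd, h])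
    else eqToHom (by simp [upd, h]) ≫ f j ≫ eqToHom (by simp [upd, h])

lemma updProj₁_eq_updMap (Z : Fin n → AddCommGrpCat.{0}) (k : Fin n) (A B : AddCommGrpCat.{0}) :
    updProj₁ Z k A B = updMap Z k (AddCommGrpCat.ofHom (AddMonoidHom.fst A B)) := rfl

lemma updProj₂_eq_updMap (Z : Fin n → AddCommGrpCat.{0}) (k : Fin n) (A B : AddCommGrpCat.{0}) :
    updProj₂ Z k A B = updMap Z k (AddCommGrpCat.ofHom (AddMonoidHom.snd A B)) := rfl

lemma updMap_comp (Z : Fin n → AddCommGrpCat.{0}) (k : Fin n) {A B C : AddCommGrpCat.{0}}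
    (g : A ⟶ B) (h : B ⟶ C) : updMap Z k (g ≫ h) = updMap Z k g ≫ updMap Z k h := by
  funext j
  by_cases hj : j = k
  · subst hj; simp [updMap]
  · simp [updMap, hj]

lemma updMap_id (Z : Fin n → AddCommGrpCat.{0}) (k : Fin n) (A : AddCommGrpCat.{0}) :
    updMap Z k (𝟙 A) = 𝟙 _ := by
  funext j
  by_cases hj : j = k
  · subst hj; simp [updMap]
  · simp [updMap, hj]

lemma update_eq_updMap_comp_updOff {Y Z : Fin n → AddCommGrpCat.{0}}
    (f : Y ⟶ Z) (k : Fin n) (c : Y k ⟶ Z k) :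
    (Function.update f k c : Y ⟶ Z) =
      eqToHom (upd_self Y k).symm ≫ updMap Y k c ≫ updOff f k (Z k) ≫ eqToHom (upd_self Z k) := by
  funext j
  by_cases hj : j = k
  · subst hj; simp [updMap, updOff]
  · simp [updMap, updOff, hj]

section Multiadditive

variable {H : (∀ _ : Fin n, AddCommGrpCat.{0}) ⥤ AddCommGrpCat.{0}} (hH : IsMultiadditive H)
include hH

-- The two projections `0 × 0 → 0` coincide, so surjectivity of the pair map forces `a = b`.
lemma IsMultiadditive.subsingleton_obj_upd_punit (Z : Fin n → AddCommGrpCat.{0}) (k : Fin n) :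
    Subsingleton (H.obj (upd Z k (AddCommGrpCat.of PUnit))) := by
  have hproj : updProj₁ Z k (AddCommGrpCat.of PUnit) (AddCommGrpCat.of PUnit) =
      updProj₂ Z k (AddCommGrpCat.of PUnit) (AddCommGrpCat.of PUnit) := by
    rw [updProj₁_eq_updMap, updProj₂_eq_updMap]
    congr 1
  refine ⟨fun a b => ?_⟩
  obtain ⟨w, hw⟩ := (hH Z k _ _).surjective (a, b)
  simp only [Prod.mk.injEq, hproj] at hw
  exact hw.1.symm.trans hw.2

lemma IsMultiadditive.map_updMap_zero (Z : Fin n → AddCommGrpCat.{0}) (k : Fin n)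
    (A B : AddCommGrpCat.{0}) : H.map (updMap Z k (0 : A ⟶ B)) = 0 := by
  have := hH.subsingleton_obj_upd_punit Z k
  rw [← Limits.zero_comp (X := A) (Y := AddCommGrpCat.of PUnit) (f := 0), updMap_comp,
    H.map_comp]
  ext x
  simp [Subsingleton.elim (H.map (updMap Z k 0) x) 0]

open AddCommGrpCat (ofHom) in
open AddMonoidHom (fst snd inl inr) in
lemma IsMultiadditive.map_updMap_fst_add_snd (Z : Fin n → AddCommGrpCat.{0}) (k : Fin n)
    (B : AddCommGrpCat.{0}) :
    H.map (updMap Z k (ofHom (fst B B + snd B B))) =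
      H.map (updProj₁ Z k B B) + H.map (updProj₂ Z k B B) := by
  have hcomp : ∀ {A C : AddCommGrpCat.{0}} (g : B ⟶ A) (h : A ⟶ C) (x : H.obj (upd Z k B)),
      H.map (updMap Z k h) (H.map (updMap Z k g) x) = H.map (updMap Z k (g ≫ h)) x := by
    intro A C g h x
    rw [updMap_comp, H.map_comp, ConcreteCategory.comp_apply]
  have inl_fst : ofHom (inl B B) ≫ ofHom (fst B B) = 𝟙 B := by ext; simp
  have inr_fst : ofHom (inr B B) ≫ ofHom (fst B B) = 0 := by ext; simp
  have inl_snd : ofHom (inl B B) ≫ ofHom (snd B B) = 0 := by ext; simp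
  have inr_snd : ofHom (inr B B) ≫ ofHom (snd B B) = 𝟙 B := by ext; simp
  have inl_add : ofHom (inl B B) ≫ ofHom (fst B B + snd B B) = 𝟙 B := by ext; simp
  have inr_add : ofHom (inr B B) ≫ ofHom (fst B B + snd B B) = 𝟙 B := by ext; simp
  ext w
  have hw : w = H.map (updMap Z k (ofHom (inl B B))) (H.map (updProj₁ Z k B B) w) +
      H.map (updMap Z k (ofHom (inr B B))) (H.map (updProj₂ Z k B B) w) := by
    apply (hH Z k B B).injective
    simp [updProj₁_eq_updMap, updProj₂_eq_updMap, hcomp, inl_fst, inr_fst, inl_snd, inr_snd,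
      updMap_id, hH.map_updMap_zero]
  conv_lhs => rw [hw]
  simp only [updProj₁_eq_updMap, updProj₂_eq_updMap, map_add, hcomp, inl_add, inr_add, updMap_id,
    H.map_id]
  rfl

lemma IsMultiadditive.map_updMap_add (Z : Fin n → AddCommGrpCat.{0}) (k : Fin n)
    {A B : AddCommGrpCat.{0}} (g e : A ⟶ B) :
    H.map (updMap Z k (g + e)) = H.map (updMap Z k g) + H.map (updMap Z k e) := by
  let pair := AddCommGrpCat.ofHom (g.hom.prod e.hom)
  have hsum : g + e = pair ≫ AddCommGrpCat.ofHom (AddMonoidHom.fst B B + AddMonoidHom.snd B B) := by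
    ext; rfl
  have hg : g = pair ≫ AddCommGrpCat.ofHom (AddMonoidHom.fst B B) := by ext; rfl
  have he : e = pair ≫ AddCommGrpCat.ofHom (AddMonoidHom.snd B B) := by ext; rfl
  rw [hsum, updMap_comp, H.map_comp, hH.map_updMap_fst_add_snd, Preadditive.comp_add,
    ← H.map_comp, ← H.map_comp, updProj₁_eq_updMap, updProj₂_eq_updMap, ← updMap_comp,
    ← updMap_comp, ← hg, ← he]

lemma IsMultiadditive.map_update_add {Y Z : Fin n → AddCommGrpCat.{0}}
    (f : Y ⟶ Z) (k : Fin n) (g e : Y k ⟶ Z k) :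
    H.map (Function.update f k (g + e) : Y ⟶ Z) =
      H.map (Function.update f k g : Y ⟶ Z) + H.map (Function.update f k e : Y ⟶ Z) := by
  simp only [update_eq_updMap_comp_updOff, H.map_comp, hH.map_updMap_add, Preadditive.add_comp,
    Preadditive.comp_add]

def IsMultiadditive.mapMultilinear (Y Z : Fin n → AddCommGrpCat.{0}) :
    MultilinearMap ℤ (fun j => Y j ⟶ Z j) (H.obj Y ⟶ H.obj Z) :=
  MultilinearMap.mk' (fun f => H.map f) (hH.map_update_add) fun f k c g =>
    map_zsmul (AddMonoidHom.mk' (fun g => H.map (Function.update f k g : Y ⟶ Z))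
      (hH.map_update_add f k)) c g

end Multiadditive

lemma AddCommGrpCat.sum_apply {M N : AddCommGrpCat.{0}} {ι : Type*} (s : Finset ι)
    (f : ι → (M ⟶ N)) (x : M) : (∑ i ∈ s, f i) x = ∑ i ∈ s, f i x := by
  change AddCommGrpCat.homAddEquiv (∑ i ∈ s, f i) x = _
  rw [map_sum, AddMonoidHom.finsetSum_apply]
  rfl

section Decomposition

variable (X : AddCommGrpCat.{0})

def coordProj (i : Fin n) :
    AddCommGrpCat.of (Fin n → X) ⟶ AddCommGrpCat.of (Fin n → X) :=
  AddCommGrpCat.ofHom ((AddMonoidHom.single _ i).comp (Pi.evalAddMonoidHom (fun _ => X) i))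

lemma sum_coordProj : ∑ i, coordProj X i = 𝟙 (AddCommGrpCat.of (Fin n → X)) :=
  AddCommGrpCat.ext fun v => by
    rw [AddCommGrpCat.sum_apply]
    exact Finset.univ_sum_single v

variable {X} {H : (∀ _ : Fin n, AddCommGrpCat.{0}) ⥤ AddCommGrpCat.{0}}

lemma IsMultiadditive.eq_sum_map_coordProj (hH : IsMultiadditive H)
    (x : H.obj (fun _ : Fin n => AddCommGrpCat.of (Fin n → X))) :
    x = ∑ φ : Fin n → Fin n, H.map (fun j => coordProj X (φ j)) x := by
  have h := (hH.mapMultilinear (fun _ : Fin n => AddCommGrpCat.of (Fin n → X))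
    (fun _ => AddCommGrpCat.of (Fin n → X))).map_sum (fun (_ : Fin n) (i : Fin n) => coordProj X i)
  simp only [sum_coordProj] at h
  calc x = H.map (𝟙 _) x := by rw [H.map_id]; rfl
    _ = (∑ φ : Fin n → Fin n, H.map (fun j => coordProj X (φ j))) x := congrArg (fun F => F x) h
    _ = _ := AddCommGrpCat.sum_apply _ _ _

end Decomposition

section Perp

variable {X : AddCommGrpCat.{0}} {H : (∀ _ : Fin n, AddCommGrpCat.{0}) ⥤ AddCommGrpCat.{0}}

lemma IsMultiadditive.map_eq_zero_of_app_eq_zero (hH : IsMultiadditive H)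
    {Y Z : Fin n → AddCommGrpCat.{0}} (f : Y ⟶ Z) (k : Fin n) (hk : f k = 0) : H.map f = 0 :=
  (hH.mapMultilinear Y Z).map_coord_zero k hk

lemma map_coordProj_eq_zero_of_mem_perpN
    {x : H.obj (fun _ : Fin n => AddCommGrpCat.of (Fin n → X))} (hx : x ∈ perpN H X)
    {φ : Fin n → Fin n} {j : Fin n} (hj : ∀ i, φ i ≠ j) :
    H.map (fun i => coordProj X (φ i)) x = 0 := by
  have hfactor : (fun i => coordProj X (φ i)) = collapseMor X j ≫ fun i =>
      AddCommGrpCat.ofHom ((AddMonoidHom.single _ (φ i)).comp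
        (Pi.evalAddMonoidHom (fun _ : {l : Fin n // l ≠ j} => X) ⟨φ i, hj i⟩)) := by
    funext i
    rfl
  rw [hfactor, H.map_comp, ConcreteCategory.comp_apply,
    AddMonoidHom.mem_ker.1 (AddSubgroup.mem_iInf.1 hx j), map_zero]

lemma coordProj_perm_eq (σ : Equiv.Perm (Fin n)) :
    (fun i => coordProj X (σ i)) = projMor (fun _ => X) σ ≫ inclMor X σ :=
  rfl

lemma IsMultiadditive.eq_sum_of_mem_perpN (hH : IsMultiadditive H)
    {x : H.obj (fun _ : Fin n => AddCommGrpCat.of (Fin n → X))} (hx : x ∈ perpN H X) :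
    x = ∑ σ : Equiv.Perm (Fin n), H.map (inclMor X σ) (H.map (projMor (fun _ => X) σ) x) := by
  conv_lhs => rw [hH.eq_sum_map_coordProj x]
  refine (Fintype.sum_of_injective _ DFunLike.coe_injective _ _ (fun φ hφ => ?_)
    (fun σ => ?_)).symm
  · obtain ⟨j, hj⟩ : ∃ j, ∀ i, φ i ≠ j := by
      by_contra! hs
      exact hφ ⟨Equiv.ofBijective φ ⟨Finite.injective_iff_surjective.2 hs, hs⟩, rfl⟩
    exact map_coordProj_eq_zero_of_mem_perpN hx hj
  · rw [coordProj_perm_eq, H.map_comp, ConcreteCategory.comp_apply]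

lemma inclMor_comp_projMor (σ : Equiv.Perm (Fin n)) :
    inclMor X σ ≫ projMor (fun _ => X) σ = 𝟙 _ := by
  funext j
  ext v
  simp [inclMor, projMor]

lemma IsMultiadditive.map_projMor_sum_inclMor (hH : IsMultiadditive H)
    (a : Equiv.Perm (Fin n) → H.obj (fun _ : Fin n => X)) (τ : Equiv.Perm (Fin n)) :
    H.map (projMor (fun _ => X) τ) (∑ σ : Equiv.Perm (Fin n), H.map (inclMor X σ) (a σ)) = a τ := by
  rw [map_sum, Finset.sum_eq_single τ]
  · rw [← ConcreteCategory.comp_apply, ← H.map_comp, inclMor_comp_projMor, H.map_id]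
    rfl
  · intro σ _ hστ
    obtain ⟨j, hj⟩ : ∃ j, σ j ≠ τ j := by
      by_contra! h
      exact hστ (Equiv.ext h)
    rw [← ConcreteCategory.comp_apply, ← H.map_comp,
      hH.map_eq_zero_of_app_eq_zero _ j (by ext; simp [inclMor, projMor, hj])]
    rfl
  · simp

lemma IsMultiadditive.map_inclMor_mem_perpN (hH : IsMultiadditive H)
    (y : H.obj (fun _ : Fin n => X)) (σ : Equiv.Perm (Fin n)) :
    H.map (inclMor X σ) y ∈ perpN H X := by
  refine AddSubgroup.mem_iInf.2 fun j => AddMonoidHom.mem_ker.2 ?_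
  rw [← ConcreteCategory.comp_apply, ← H.map_comp,
    hH.map_eq_zero_of_app_eq_zero _ (σ.symm j) (by ext v i; simp [inclMor, collapseMor, i.2]; rfl)]
  rfl

lemma inclMor_comp_foldMor (σ : Equiv.Perm (Fin n)) :
    inclMor X σ ≫ foldMor X = 𝟙 _ := by
  funext j
  ext v
  simp [inclMor, foldMor]

lemma map_foldMor_sum_inclMor (a : Equiv.Perm (Fin n) → H.obj (fun _ : Fin n => X)) :
    H.map (foldMor X) (∑ σ : Equiv.Perm (Fin n), H.map (inclMor X σ) (a σ)) = ∑ σ, a σ := by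
  refine (map_sum _ _ _).trans (Finset.sum_congr rfl fun σ _ => ?_)
  rw [← ConcreteCategory.comp_apply, ← H.map_comp, inclMor_comp_foldMor, H.map_id]
  rfl

end Perp

end

theorem stmt12_general {n : ℕ} (H : (∀ _ : Fin n, AddCommGrpCat.{0}) ⥤ AddCommGrpCat.{0})
    (hadd : ∀ (X : Fin n → AddCommGrpCat.{0}) (i : Fin n) (A B : AddCommGrpCat.{0}),
      Function.Bijective (fun x : H.obj (upd X i (AddCommGrpCat.of (A × B))) =>
        (H.map (updProj₁ X i A B) x, H.map (updProj₂ X i A B) x)))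
    (X : AddCommGrpCat.{0}) :
    (∀ a : Equiv.Perm (Fin n) → H.obj (fun _ : Fin n => X),
      (∑ σ : Equiv.Perm (Fin n), H.map (inclMor X σ) (a σ)) ∈ perpN H X) ∧
    Function.Injective
      (fun a : Equiv.Perm (Fin n) → H.obj (fun _ : Fin n => X) =>
        ∑ σ : Equiv.Perm (Fin n), H.map (inclMor X σ) (a σ)) ∧
    Set.range
      (fun a : Equiv.Perm (Fin n) → H.obj (fun _ : Fin n => X) =>
        ∑ σ : Equiv.Perm (Fin n), H.map (inclMor X σ) (a σ)) = ↑(perpN H X) ∧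
    (∀ a : Equiv.Perm (Fin n) → H.obj (fun _ : Fin n => X),
      H.map (foldMor X) (∑ σ : Equiv.Perm (Fin n), H.map (inclMor X σ) (a σ)) =
        ∑ σ : Equiv.Perm (Fin n), a σ) := by
  have hH : IsMultiadditive H := hadd
  have mem : ∀ a : Equiv.Perm (Fin n) → H.obj (fun _ : Fin n => X),
      (∑ σ : Equiv.Perm (Fin n), H.map (inclMor X σ) (a σ)) ∈ perpN H X := fun a =>
    AddSubgroup.sum_mem _ fun σ _ => hH.map_inclMor_mem_perpN (a σ) σ
  refine ⟨mem, fun a b hab => funext fun τ => ?_, ?_, map_foldMor_sum_inclMor⟩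
  · rw [← hH.map_projMor_sum_inclMor a τ, ← hH.map_projMor_sum_inclMor b τ]
    exact congrArg _ hab
  · refine Set.Subset.antisymm (Set.range_subset_iff.2 mem) fun x hx => ?_
    exact ⟨_, (hH.eq_sum_of_mem_perpN hx).symm⟩

/-- For a symmetric multiadditive functor `H` of `n` variables of
abelian groups, evaluated with all variables equal to `X`: the map
`⊕_{σ ∈ Σₙ} H[1] → ∏_{σ} H[σ] ≅ ⊥ₙH(X)` sending the `σ`-summand by the relabeling
isomorphism (i.e. `a ↦ ∑_σ H(ι_σ)(a σ)`, where `ι_σ` includes `X` as the `σ j`-th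
summand in the `j`-th variable) is injective with image exactly `⊥ₙH(X)`, and under
this identification the counit `ε` (restriction of `H(fold)`) corresponds to the map
that is the identity on each summand, `a ↦ ∑_σ a σ`. -/
theorem stmt12 {n : ℕ} (H : (∀ _ : Fin n, AddCommGrpCat.{0}) ⥤ AddCommGrpCat.{0})
    (hadd : ∀ (X : Fin n → AddCommGrpCat.{0}) (i : Fin n) (A B : AddCommGrpCat.{0}),
      Function.Bijective (fun x : H.obj (upd X i (AddCommGrpCat.of (A × B))) =>
        (H.map (updProj₁ X i A B) x, H.map (updProj₂ X i A B) x)))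
    (σact : ∀ σ : Equiv.Perm (Fin n), H ⟶ reindexF σ ⋙ H)
    (σact_mul : ∀ (σ τ : Equiv.Perm (Fin n)) (A : ∀ _ : Fin n, AddCommGrpCat.{0}),
      (σact (σ * τ)).app A = (σact σ).app A ≫ (σact τ).app ((reindexF σ).obj A))
    (X : AddCommGrpCat.{0}) :
    (∀ a : Equiv.Perm (Fin n) → H.obj (fun _ : Fin n => X),
      (∑ σ : Equiv.Perm (Fin n), H.map (inclMor X σ) (a σ)) ∈ perpN H X) ∧
    Function.Injective
      (fun a : Equiv.Perm (Fin n) → H.obj (fun _ : Fin n => X) =>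
        ∑ σ : Equiv.Perm (Fin n), H.map (inclMor X σ) (a σ)) ∧
    Set.range
      (fun a : Equiv.Perm (Fin n) → H.obj (fun _ : Fin n => X) =>
        ∑ σ : Equiv.Perm (Fin n), H.map (inclMor X σ) (a σ)) = ↑(perpN H X) ∧
    (∀ a : Equiv.Perm (Fin n) → H.obj (fun _ : Fin n => X),
      H.map (foldMor X) (∑ σ : Equiv.Perm (Fin n), H.map (inclMor X σ) (a σ)) =
        ∑ σ : Equiv.Perm (Fin n), a σ) :=
  stmt12_general H hadd X
end
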